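/- arXiv:2303.17534 — 5 statements merged into one kernel-verified Lean document; each statement's English description precedes it below -/
import Mathlib

section
/- Let G be a finite simple graph, let e = {u,v} be an edge of G, and let G' be the subdivision of G at e, with new vertex w and new edges e₁ = {u,w} and e₂ = {w,v}. Then: (i) for every spanning 2-forest F of G with e ∈ F, the spanning subgraph of G' with edge set (E(F) \ {e}) ∪ {e₁, e₂} is a spanning 2-forest of G'; (ii) for every spanning 2-forest F of G with e ∉ F, both spanning subgraphs of G' with edge sets E(F) ∪ {e₁} and E(F) ∪ {e₂} are spanning 2-forests of G'; (iii) for every spanning tree T of G with e ∉ T, the spanning subgraph of G' with edge set E(T) is a spanning 2-forest of G' in which the new vertex w is an isolated connected component; (iv) every spanning 2-forest of G' arises in exactly one of these ways (those of type (i) contain both new edges, those of type (ii) contain exactly one, and those of type (iii) contain neither). Consequently these assignments define a bijection between the set of spanning 2-forests of G' and the disjoint union of the set of spanning 2-forests of G containing e, two copies of the set of spanning 2-forests of G not containing e, and the set of spanning trees of G not containing e. -/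
open SimpleGraph

variable {V : Type*}

/-- The subdivision of a simple graph `G` at the edge `e = {u, v}`: the graph on the vertex
set `V ⊕ Unit` (the extra vertex `w = Sum.inr ()` is the new vertex) whose edges are all edges
of `G` except `e`, together with the two new edges `e₁ = {u, w}` and `e₂ = {w, v}`. -/
def subdiv (G : SimpleGraph V) (u v : V) : SimpleGraph (V ⊕ Unit) where
  Adj a b :=
    match a, b with
    | Sum.inl a, Sum.inl b => G.Adj a b ∧ s(a, b) ≠ s(u, v)
    | Sum.inl a, Sum.inr _ => a = u ∨ a = v
    | Sum.inr _, Sum.inl b => b = u ∨ b = v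
    | Sum.inr _, Sum.inr _ => False
  symm := by
    constructor
    rintro (a | a) (b | b) h
    · exact ⟨h.1.symm, fun hc => h.2 (by rw [Sym2.eq_swap]; exact hc)⟩
    · exact h
    · exact h
    · exact h
  loopless := by
    constructor
    rintro (a | a) h
    · exact G.loopless.irrefl a h.1
    · exact h

/-- The first new edge `e₁ = {u, w}` of the subdivision. -/
def newE₁ (u : V) : Sym2 (V ⊕ Unit) := s(Sum.inl u, Sum.inr ())

/-- The second new edge `e₂ = {w, v}` of the subdivision. -/
def newE₂ (v : V) : Sym2 (V ⊕ Unit) := s(Sum.inr (), Sum.inl v)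

/-- `T` is a spanning tree of `G`: a (spanning) subgraph on the full vertex set which is
connected and has no cycles. -/
def IsSpanTree {W : Type*} (G T : SimpleGraph W) : Prop := T ≤ G ∧ T.IsTree

/-- `F` is a spanning 2-forest of `G`: a (spanning) subgraph on the full vertex set which has
no cycles and exactly two connected components. -/
def IsSpanTwoForest {W : Type*} (G F : SimpleGraph W) : Prop :=
  F ≤ G ∧ F.IsAcyclic ∧ Nat.card F.ConnectedComponent = 2

/-- The spanning subgraph of the subdivision with edge set `(E(F) \ {e}) ∪ {e₁, e₂}`. -/
def forestIn (F : SimpleGraph V) (u v : V) : SimpleGraph (V ⊕ Unit) :=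
  fromEdgeSet ((Sym2.map Sum.inl '' (F.edgeSet \ {s(u, v)})) ∪ {newE₁ u, newE₂ v})

/-- The spanning subgraph of the subdivision with edge set `E(F) ∪ {e₁}`. -/
def forestOut₁ (F : SimpleGraph V) (u : V) : SimpleGraph (V ⊕ Unit) :=
  fromEdgeSet ((Sym2.map Sum.inl '' F.edgeSet) ∪ {newE₁ u})

/-- The spanning subgraph of the subdivision with edge set `E(F) ∪ {e₂}`. -/
def forestOut₂ (F : SimpleGraph V) (v : V) : SimpleGraph (V ⊕ Unit) :=
  fromEdgeSet ((Sym2.map Sum.inl '' F.edgeSet) ∪ {newE₂ v})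

/-- The spanning subgraph of the subdivision with edge set `E(T)` (the new vertex isolated). -/
def treeEmbed (T : SimpleGraph V) : SimpleGraph (V ⊕ Unit) :=
  fromEdgeSet (Sym2.map Sum.inl '' T.edgeSet)

/-!
In a spanning subgraph of the subdivision the new vertex `w` can only be joined to `u` and `v`,
so the subgraph is determined by its restriction to `V` and by which of `e₁ = uw`, `e₂ = wv` it
contains. With both, the path `u – w – v` replaces `e`; with one, `w` is a leaf at `u` or `v`;
with none, `w` is isolated. Subdividing an edge and attaching a leaf preserve acyclicity and the
number of components, while adding an isolated vertex preserves acyclicity and adds a component,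
which is why the spanning trees of `G` account for the last case.
-/

open Sum

namespace SimpleGraph

variable {W : Type*} {G : SimpleGraph V} {H : SimpleGraph W}

theorem Reachable.map_of_forall_adj (f : V → W)
    (hf : ∀ a b, G.Adj a b → H.Reachable (f a) (f b)) {x y : V} (h : G.Reachable x y) :
    H.Reachable (f x) (f y) := by
  rw [reachable_iff_reflTransGen] at h ⊢
  exact h.lift' f fun a b hab => (reachable_iff_reflTransGen _ _).mp (hf a b hab)

def ConnectedComponent.equivOfReachable (f : V → W) (g : W → V)
    (hf : ∀ a b, G.Adj a b → H.Reachable (f a) (f b))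
    (hg : ∀ a b, H.Adj a b → G.Reachable (g a) (g b))
    (hgf : ∀ x, G.Reachable (g (f x)) x) (hfg : ∀ y, H.Reachable (f (g y)) y) :
    G.ConnectedComponent ≃ H.ConnectedComponent where
  toFun := ConnectedComponent.lift (H.connectedComponentMk ∘ f) fun _ _ p _ =>
    ConnectedComponent.sound (p.reachable.map_of_forall_adj f hf)
  invFun := ConnectedComponent.lift (G.connectedComponentMk ∘ g) fun _ _ p _ =>
    ConnectedComponent.sound (p.reachable.map_of_forall_adj g hg)
  left_inv := ConnectedComponent.ind fun x => ConnectedComponent.sound (hgf x)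
  right_inv := ConnectedComponent.ind fun y => ConnectedComponent.sound (hfg y)

theorem natCard_connectedComponent_eq_one_iff [Finite V] :
    Nat.card G.ConnectedComponent = 1 ↔ G.Connected := by
  rw [Nat.card_eq_one_iff_unique, connected_iff]
  exact ⟨fun ⟨_, ⟨c⟩⟩ => ⟨fun x y => ConnectedComponent.exact (Subsingleton.elim _ _),
    ⟨c.exists_rep.choose⟩⟩, fun ⟨h, _⟩ => ⟨h.subsingleton_connectedComponent, inferInstance⟩⟩

theorem reachable_sum_inl_iff {a b : V} :
    (G ⊕g H).Reachable (inl a) (inl b) ↔ G.Reachable a b := by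
  refine ⟨fun h => h.map_of_forall_adj (Sum.elim id fun _ => a) ?_,
    fun h => h.map Embedding.sumInl.toHom⟩
  rintro (x | x) (y | y) hxy <;> simp at hxy
  · exact hxy.reachable
  · rfl

theorem reachable_sum_inr_iff {a b : W} :
    (G ⊕g H).Reachable (inr a) (inr b) ↔ H.Reachable a b :=
  Iso.sumComm.reachable_iff.symm.trans reachable_sum_inl_iff

def connectedComponentSumEquiv :
    (G ⊕g H).ConnectedComponent ≃ G.ConnectedComponent ⊕ H.ConnectedComponent where
  toFun := ConnectedComponent.lift
    (Sum.elim (inl ∘ G.connectedComponentMk) (inr ∘ H.connectedComponentMk)) fun x y p _ => by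
      rcases x with x | x <;> rcases y with y | y
      · exact congrArg inl (ConnectedComponent.sound (reachable_sum_inl_iff.mp p.reachable))
      · exact absurd p.reachable (not_reachable_sum_inl_inr x y)
      · exact absurd p.reachable.symm (not_reachable_sum_inl_inr y x)
      · exact congrArg inr (ConnectedComponent.sound (reachable_sum_inr_iff.mp p.reachable))
  invFun := Sum.elim (ConnectedComponent.map Embedding.sumInl.toHom)
    (ConnectedComponent.map Embedding.sumInr.toHom)
  left_inv := ConnectedComponent.ind fun x => by cases x <;> rfl
  right_inv := by rintro (c | c) <;> induction c using ConnectedComponent.ind <;> rfl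

theorem natCard_connectedComponent_sum [Finite V] [Finite W] :
    Nat.card (G ⊕g H).ConnectedComponent =
      Nat.card G.ConnectedComponent + Nat.card H.ConnectedComponent := by
  rw [Nat.card_congr connectedComponentSumEquiv, Nat.card_sum]

theorem deleteEdges_sum_inl {a b : V} :
    (G ⊕g H).deleteEdges {s(inl a, inl b)} = G.deleteEdges {s(a, b)} ⊕g H := by
  ext (x | x) (y | y) <;> simp

theorem deleteEdges_sum_inr {a b : W} :
    (G ⊕g H).deleteEdges {s(inr a, inr b)} = G ⊕g H.deleteEdges {s(a, b)} := by
  ext (x | x) (y | y) <;> simp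

theorem isAcyclic_sum_iff : (G ⊕g H).IsAcyclic ↔ G.IsAcyclic ∧ H.IsAcyclic := by
  refine ⟨fun h => ⟨h.embedding Embedding.sumInl, h.embedding Embedding.sumInr⟩,
    fun ⟨hG, hH⟩ => ?_⟩
  rw [isAcyclic_iff_forall_adj_isBridge] at hG hH ⊢
  rintro (a | a) (b | b) hab <;> simp only [sum_adj] at hab
  · rw [isBridge_iff, deleteEdges_sum_inl, reachable_sum_inl_iff]
    exact hG hab
  · rw [isBridge_iff, deleteEdges_sum_inr, reachable_sum_inr_iff]
    exact hH hab

theorem deleteEdges_sup_edge {u v : V} (h : G.Adj u v) :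
    G.deleteEdges {s(u, v)} ⊔ edge u v = G :=
  sdiff_sup_cancel ((edge_le_iff G).mpr (Or.inr h))

end SimpleGraph

section Subdivision

variable {G F T : SimpleGraph V} {u v : V}

theorem subdiv_comm : subdiv G u v = subdiv G v u := by
  ext (a | a) (b | b) <;> simp [subdiv, Sym2.eq_swap] <;> tauto

theorem subdiv_adj_inl_inr {a : V} : (subdiv G u v).Adj (inl a) (inr ()) ↔ a = u ∨ a = v :=
  Iff.rfl

theorem subdiv_adj_inr_inl {a : V} : (subdiv G u v).Adj (inr ()) (inl a) ↔ a = u ∨ a = v :=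
  Iff.rfl

theorem comap_inl_le_and_not_adj_of_le_subdiv {F' : SimpleGraph (V ⊕ Unit)}
    (h : F' ≤ subdiv G u v) : F'.comap inl ≤ G ∧ ¬(F'.comap inl).Adj u v :=
  ⟨fun _ _ hab => (h hab).1, fun huv => (h huv).2 rfl⟩

theorem eq_of_le_subdiv {F₁ F₂ : SimpleGraph (V ⊕ Unit)} (h₁ : F₁ ≤ subdiv G u v)
    (h₂ : F₂ ≤ subdiv G u v) (hV : F₁.comap inl = F₂.comap inl)
    (hu : F₁.Adj (inl u) (inr ()) ↔ F₂.Adj (inl u) (inr ()))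
    (hv : F₁.Adj (inl v) (inr ()) ↔ F₂.Adj (inl v) (inr ())) : F₁ = F₂ := by
  have hw (a : V) : F₁.Adj (inl a) (inr ()) ↔ F₂.Adj (inl a) (inr ()) := by
    constructor <;> intro h
    · rcases h₁ h with rfl | rfl
      exacts [hu.mp h, hv.mp h]
    · rcases h₂ h with rfl | rfl
      exacts [hu.mpr h, hv.mpr h]
  ext (a | ⟨⟨⟩⟩) (b | ⟨⟨⟩⟩)
  · exact iff_of_eq (congrFun₂ (SimpleGraph.ext_iff.mp hV) a b)
  · exact hw a
  · rw [adj_comm, hw b, adj_comm]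
  · exact ⟨fun h => (h₁ h).elim, fun h => (h₂ h).elim⟩

theorem treeEmbed_eq_sum (T : SimpleGraph V) : treeEmbed T = T ⊕g (⊥ : SimpleGraph Unit) := by
  have : treeEmbed T = T.map Function.Embedding.inl := by
    rw [treeEmbed, ← fromEdgeSet_edgeSet (T.map _), edgeSet_map]; rfl
  rw [this]
  ext (a | a) (b | b) <;> simp

theorem forestOut₁_eq (F : SimpleGraph V) (u : V) :
    forestOut₁ F u = treeEmbed F ⊔ edge (inl u) (inr ()) := by
  rw [forestOut₁, fromEdgeSet_union, treeEmbed]; rfl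

@[simp] theorem forestOut₂_eq_forestOut₁ (F : SimpleGraph V) (v : V) :
    forestOut₂ F v = forestOut₁ F v := by
  rw [forestOut₂, forestOut₁, newE₂, newE₁, Sym2.eq_swap]

theorem forestIn_eq (F : SimpleGraph V) (u v : V) :
    forestIn F u v = forestOut₁ (F.deleteEdges {s(u, v)}) u ⊔ edge (inr ()) (inl v) := by
  rw [forestIn, forestOut₁, ← edgeSet_deleteEdges, edge, ← fromEdgeSet_union, Set.union_assoc]
  rfl

@[simp] theorem treeEmbed_adj_inl_inr {a : V} : ¬(treeEmbed T).Adj (inl a) (inr ()) := by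
  simp [treeEmbed_eq_sum]

theorem treeEmbed_not_adj_inr (x : V ⊕ Unit) : ¬(treeEmbed T).Adj (inr ()) x := by
  cases x <;> simp [treeEmbed_eq_sum]

@[simp] theorem comap_inl_treeEmbed : (treeEmbed T).comap inl = T := by
  ext; simp [treeEmbed_eq_sum]

@[simp] theorem forestOut₁_adj_inl_inl {a b : V} :
    (forestOut₁ F u).Adj (inl a) (inl b) ↔ F.Adj a b := by
  simp [forestOut₁_eq, treeEmbed_eq_sum, edge_adj]

@[simp] theorem forestOut₁_adj_inl_inr {a : V} :
    (forestOut₁ F u).Adj (inl a) (inr ()) ↔ a = u := by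
  simp [forestOut₁_eq, treeEmbed_eq_sum, edge_adj]

@[simp] theorem comap_inl_forestOut₁ : (forestOut₁ F u).comap inl = F := by
  ext; simp

@[simp] theorem forestIn_adj_inl_inl {a b : V} :
    (forestIn F u v).Adj (inl a) (inl b) ↔ F.Adj a b ∧ s(a, b) ≠ s(u, v) := by
  simp [forestIn_eq, edge_adj]

@[simp] theorem forestIn_adj_inl_inr {a : V} :
    (forestIn F u v).Adj (inl a) (inr ()) ↔ a = u ∨ a = v := by
  simp [forestIn_eq, forestOut₁_eq, treeEmbed_eq_sum, edge_adj]

@[simp] theorem comap_inl_forestIn : (forestIn F u v).comap inl = F.deleteEdges {s(u, v)} := by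
  ext; simp

theorem treeEmbed_le_subdiv_iff : treeEmbed T ≤ subdiv G u v ↔ T ≤ G ∧ ¬T.Adj u v := by
  refine ⟨fun h => by simpa using comap_inl_le_and_not_adj_of_le_subdiv h,
    fun ⟨hT, huv⟩ => ?_⟩
  rintro (a | a) (b | b) hab <;> simp [treeEmbed_eq_sum] at hab
  exact ⟨hT hab, fun h => huv (by rwa [← mem_edgeSet, ← h])⟩

theorem forestOut₁_le_subdiv_iff : forestOut₁ F u ≤ subdiv G u v ↔ F ≤ G ∧ ¬F.Adj u v := by
  rw [forestOut₁_eq, sup_le_iff, treeEmbed_le_subdiv_iff, edge_le_iff, subdiv_adj_inl_inr]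
  simp

theorem forestOut₂_le_subdiv_iff : forestOut₂ F v ≤ subdiv G u v ↔ F ≤ G ∧ ¬F.Adj u v := by
  rw [forestOut₂_eq_forestOut₁, subdiv_comm, forestOut₁_le_subdiv_iff, F.adj_comm]

theorem forestIn_le_subdiv_iff (he : G.Adj u v) (hF : F.Adj u v) :
    forestIn F u v ≤ subdiv G u v ↔ F ≤ G := by
  rw [forestIn_eq, sup_le_iff, forestOut₁_le_subdiv_iff, edge_le_iff, subdiv_adj_inr_inl]
  simp only [deleteEdges_adj, Set.mem_singleton_iff, not_true_eq_false, and_false,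
    not_false_eq_true, and_true, reduceCtorEq, or_true]
  refine ⟨fun h => ?_, (deleteEdges_le _).trans⟩
  rw [← deleteEdges_sup_edge hF]
  exact sup_le h ((edge_le_iff G).mpr (Or.inr he))

theorem isAcyclic_treeEmbed_iff : (treeEmbed T).IsAcyclic ↔ T.IsAcyclic := by
  simp [treeEmbed_eq_sum, isAcyclic_sum_iff]

theorem natCard_connectedComponent_treeEmbed [Finite V] :
    Nat.card (treeEmbed T).ConnectedComponent = Nat.card T.ConnectedComponent + 1 := by
  simp [treeEmbed_eq_sum, natCard_connectedComponent_sum]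

theorem isAcyclic_forestOut₁_iff : (forestOut₁ F u).IsAcyclic ↔ F.IsAcyclic := by
  rw [forestOut₁_eq, isAcyclic_add_edge_iff_of_not_reachable, isAcyclic_treeEmbed_iff]
  rw [treeEmbed_eq_sum]
  exact not_reachable_sum_inl_inr _ _

theorem reachable_of_forestOut₁_adj {x y : V ⊕ Unit} (h : (forestOut₁ F u).Adj x y) :
    F.Reachable (x.elim id fun _ => u) (y.elim id fun _ => u) := by
  rcases x with a | ⟨⟨⟩⟩ <;> rcases y with b | ⟨⟨⟩⟩
  · exact (forestOut₁_adj_inl_inl.mp h).reachable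
  · obtain rfl := forestOut₁_adj_inl_inr.mp h
    exact Reachable.refl _
  · obtain rfl := forestOut₁_adj_inl_inr.mp h.symm
    exact Reachable.refl _
  · exact absurd rfl h.ne

theorem reachable_forestOut₁_inl_iff {a b : V} :
    (forestOut₁ F u).Reachable (inl a) (inl b) ↔ F.Reachable a b :=
  ⟨fun h => h.map_of_forall_adj _ fun _ _ => reachable_of_forestOut₁_adj,
    fun h => h.map_of_forall_adj inl fun _ _ hab => (forestOut₁_adj_inl_inl.mpr hab).reachable⟩

theorem natCard_connectedComponent_forestOut₁ :
    Nat.card (forestOut₁ F u).ConnectedComponent = Nat.card F.ConnectedComponent :=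
  Nat.card_congr <| ConnectedComponent.equivOfReachable (Sum.elim id fun _ => u) inl
    (fun _ _ => reachable_of_forestOut₁_adj)
    (fun _ _ hab => (forestOut₁_adj_inl_inl.mpr hab).reachable)
    (by rintro (a | ⟨⟨⟩⟩); exacts [Reachable.refl _, Adj.reachable (by simp)])
    (fun _ => Reachable.refl _)

theorem reachable_of_forestIn_adj (hF : F.Adj u v) {x y : V ⊕ Unit}
    (h : (forestIn F u v).Adj x y) :
    F.Reachable (x.elim id fun _ => u) (y.elim id fun _ => u) := by
  rcases x with a | ⟨⟨⟩⟩ <;> rcases y with b | ⟨⟨⟩⟩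
  · exact (forestIn_adj_inl_inl.mp h).1.reachable
  · rcases forestIn_adj_inl_inr.mp h with rfl | rfl
    exacts [Reachable.refl _, hF.symm.reachable]
  · rcases forestIn_adj_inl_inr.mp h.symm with rfl | rfl
    exacts [Reachable.refl _, hF.reachable]
  · exact absurd rfl h.ne

theorem reachable_forestIn_inl_of_adj {a b : V} (h : F.Adj a b) :
    (forestIn F u v).Reachable (inl a) (inl b) := by
  by_cases hab : s(a, b) = s(u, v)
  · have huv : (forestIn F u v).Reachable (inl u) (inl v) :=
      (forestIn_adj_inl_inr.mpr (Or.inl rfl)).reachable.trans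
        (forestIn_adj_inl_inr.mpr (Or.inr rfl)).reachable.symm
    rcases Sym2.eq_iff.mp hab with ⟨rfl, rfl⟩ | ⟨rfl, rfl⟩
    exacts [huv, huv.symm]
  · exact (forestIn_adj_inl_inl.mpr ⟨h, hab⟩).reachable

theorem natCard_connectedComponent_forestIn (hF : F.Adj u v) :
    Nat.card (forestIn F u v).ConnectedComponent = Nat.card F.ConnectedComponent :=
  Nat.card_congr <| ConnectedComponent.equivOfReachable (Sum.elim id fun _ => u) inl
    (fun _ _ => reachable_of_forestIn_adj hF) (fun _ _ => reachable_forestIn_inl_of_adj)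
    (by rintro (a | ⟨⟨⟩⟩); exacts [Reachable.refl _, Adj.reachable (by simp)])
    (fun _ => Reachable.refl _)

/- Writing `F₀ = F - e`, the graph `forestIn F u v` is `F₀` with a leaf `w` at `u` and the
extra edge `wv`, while `F = F₀ + uv`; by `isAcyclic_sup_fromEdgeSet_iff` both are acyclic
iff `F₀` is acyclic and does not connect `u` to `v`. -/
theorem isAcyclic_forestIn_iff (hF : F.Adj u v) : (forestIn F u v).IsAcyclic ↔ F.IsAcyclic := by
  have hw : (forestOut₁ (F.deleteEdges {s(u, v)}) u).Reachable (inr ()) (inl v) ↔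
      (F.deleteEdges {s(u, v)}).Reachable u v := by
    have hu : (forestOut₁ (F.deleteEdges {s(u, v)}) u).Reachable (inr ()) (inl u) :=
      Adj.reachable (by simp [adj_comm _ (inr ())])
    rw [← reachable_forestOut₁_inl_iff (u := u)]
    exact ⟨hu.symm.trans, hu.trans⟩
  conv_rhs => rw [← deleteEdges_sup_edge hF]
  rw [forestIn_eq, isAcyclic_sup_fromEdgeSet_iff, isAcyclic_sup_fromEdgeSet_iff,
    isAcyclic_forestOut₁_iff, hw]
  simp [hF.ne, hF.ne.symm, adj_comm _ (inr ())]

theorem isSpanTwoForest_forestIn_iff (he : G.Adj u v) (hF : F.Adj u v) :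
    IsSpanTwoForest (subdiv G u v) (forestIn F u v) ↔ IsSpanTwoForest G F := by
  rw [IsSpanTwoForest, IsSpanTwoForest, forestIn_le_subdiv_iff he hF, isAcyclic_forestIn_iff hF,
    natCard_connectedComponent_forestIn hF]

theorem isSpanTwoForest_forestOut₁_iff :
    IsSpanTwoForest (subdiv G u v) (forestOut₁ F u) ↔ IsSpanTwoForest G F ∧ ¬F.Adj u v := by
  simp only [IsSpanTwoForest, forestOut₁_le_subdiv_iff, isAcyclic_forestOut₁_iff,
    natCard_connectedComponent_forestOut₁]
  tauto

theorem isSpanTwoForest_forestOut₂_iff :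
    IsSpanTwoForest (subdiv G u v) (forestOut₂ F v) ↔ IsSpanTwoForest G F ∧ ¬F.Adj u v := by
  rw [forestOut₂_eq_forestOut₁, subdiv_comm, isSpanTwoForest_forestOut₁_iff, F.adj_comm]

theorem isSpanTwoForest_treeEmbed_iff [Finite V] :
    IsSpanTwoForest (subdiv G u v) (treeEmbed T) ↔ IsSpanTree G T ∧ ¬T.Adj u v := by
  simp only [IsSpanTwoForest, IsSpanTree, treeEmbed_le_subdiv_iff, isAcyclic_treeEmbed_iff,
    natCard_connectedComponent_treeEmbed, Nat.reduceEqDiff, natCard_connectedComponent_eq_one_iff,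
    isTree_iff]
  tauto

def toSubdivTwoForest [Finite V] (he : G.Adj u v) :
    {F : SimpleGraph V // IsSpanTwoForest G F ∧ s(u, v) ∈ F.edgeSet} ⊕
      {F : SimpleGraph V // IsSpanTwoForest G F ∧ s(u, v) ∉ F.edgeSet} ⊕
      {F : SimpleGraph V // IsSpanTwoForest G F ∧ s(u, v) ∉ F.edgeSet} ⊕
      {T : SimpleGraph V // IsSpanTree G T ∧ s(u, v) ∉ T.edgeSet} →
    {F' : SimpleGraph (V ⊕ Unit) // IsSpanTwoForest (subdiv G u v) F'} :=
  Sum.elim (fun F => ⟨forestIn F.1 u v, (isSpanTwoForest_forestIn_iff he F.2.2).mpr F.2.1⟩) <|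
    Sum.elim (fun F => ⟨forestOut₁ F.1 u, isSpanTwoForest_forestOut₁_iff.mpr F.2⟩) <|
    Sum.elim (fun F => ⟨forestOut₂ F.1 v, isSpanTwoForest_forestOut₂_iff.mpr F.2⟩)
      fun T => ⟨treeEmbed T.1, isSpanTwoForest_treeEmbed_iff.mpr T.2⟩

theorem toSubdivTwoForest_injective [Finite V] (he : G.Adj u v) :
    Function.Injective (toSubdivTwoForest he) := by
  intro x y hxy
  have hval := congrArg Subtype.val hxy
  have hV := congrArg (SimpleGraph.comap inl) hval
  have hu := congrArg (·.Adj (inl u) (inr ())) hval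
  have hv := congrArg (·.Adj (inl v) (inr ())) hval
  rcases x with ⟨F₁, hF₁⟩ | ⟨F₁, hF₁⟩ | ⟨F₁, hF₁⟩ | ⟨T₁, hT₁⟩ <;>
    rcases y with ⟨F₂, hF₂⟩ | ⟨F₂, hF₂⟩ | ⟨F₂, hF₂⟩ | ⟨T₂, hT₂⟩ <;>
    simp [toSubdivTwoForest, he.ne, he.ne.symm] at hV hu hv ⊢
  · rw [← deleteEdges_sup_edge hF₁.2, ← deleteEdges_sup_edge hF₂.2, hV]
  all_goals exact hV

theorem toSubdivTwoForest_surjective [Finite V] (he : G.Adj u v) :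
    Function.Surjective (toSubdivTwoForest he) := by
  rintro ⟨F', hF'⟩
  obtain ⟨hle, hF'uv⟩ := comap_inl_le_and_not_adj_of_le_subdiv hF'.1
  by_cases hu : F'.Adj (inl u) (inr ()) <;> by_cases hv : F'.Adj (inl v) (inr ())
  · have hF : (F'.comap inl ⊔ edge u v).Adj u v := Or.inr (by simp [edge_adj, he.ne])
    have hle' := sup_le hle ((edge_le_iff G).mpr (Or.inr he))
    have h : forestIn (F'.comap inl ⊔ edge u v) u v = F' :=
      eq_of_le_subdiv ((forestIn_le_subdiv_iff he hF).mpr hle') hF'.1 (by simpa using hF'uv)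
        (by simp [hu]) (by simp [hv])
    rw [← h] at hF'
    exact ⟨inl ⟨_, (isSpanTwoForest_forestIn_iff he hF).mp hF', hF⟩, Subtype.ext h⟩
  · have h : forestOut₁ (F'.comap inl) u = F' :=
      eq_of_le_subdiv (forestOut₁_le_subdiv_iff.mpr ⟨hle, hF'uv⟩) hF'.1 (by simp)
        (by simp [hu]) (by simp [hv, he.ne.symm])
    rw [← h] at hF'
    exact ⟨inr (inl ⟨_, isSpanTwoForest_forestOut₁_iff.mp hF'⟩), Subtype.ext h⟩
  · have h : forestOut₂ (F'.comap inl) v = F' :=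
      eq_of_le_subdiv (forestOut₂_le_subdiv_iff.mpr ⟨hle, hF'uv⟩) hF'.1 (by simp)
        (by simp [hu, he.ne]) (by simp [hv])
    rw [← h] at hF'
    exact ⟨inr (inr (inl ⟨_, isSpanTwoForest_forestOut₂_iff.mp hF'⟩)), Subtype.ext h⟩
  · have h : treeEmbed (F'.comap inl) = F' :=
      eq_of_le_subdiv (treeEmbed_le_subdiv_iff.mpr ⟨hle, hF'uv⟩) hF'.1 (by simp)
        (by simp [hu]) (by simp [hv])
    rw [← h] at hF'
    exact ⟨inr (inr (inr ⟨_, isSpanTwoForest_treeEmbed_iff.mp hF'⟩)), Subtype.ext h⟩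

end Subdivision

/-- Subdividing an edge of a finite simple graph: spanning 2-forests of the subdivision
correspond bijectively to spanning 2-forests of `G` containing `e`, two copies of the spanning
2-forests of `G` not containing `e`, and the spanning trees of `G` not containing `e`. -/
theorem subdivision_spanning_two_forests [Fintype V] (G : SimpleGraph V) (u v : V)
    (he : G.Adj u v) :
    (∀ F : SimpleGraph V, IsSpanTwoForest G F → s(u, v) ∈ F.edgeSet →
      IsSpanTwoForest (subdiv G u v) (forestIn F u v)) ∧
    (∀ F : SimpleGraph V, IsSpanTwoForest G F → s(u, v) ∉ F.edgeSet →
      IsSpanTwoForest (subdiv G u v) (forestOut₁ F u) ∧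
      IsSpanTwoForest (subdiv G u v) (forestOut₂ F v)) ∧
    (∀ T : SimpleGraph V, IsSpanTree G T → s(u, v) ∉ T.edgeSet →
      IsSpanTwoForest (subdiv G u v) (treeEmbed T) ∧
      ∀ x : V ⊕ Unit, ¬ (treeEmbed T).Adj (Sum.inr ()) x) ∧
    ∃ Φ : ({F : SimpleGraph V // IsSpanTwoForest G F ∧ s(u, v) ∈ F.edgeSet} ⊕
            {F : SimpleGraph V // IsSpanTwoForest G F ∧ s(u, v) ∉ F.edgeSet} ⊕
            {F : SimpleGraph V // IsSpanTwoForest G F ∧ s(u, v) ∉ F.edgeSet} ⊕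
            {T : SimpleGraph V // IsSpanTree G T ∧ s(u, v) ∉ T.edgeSet}) ≃
          {F' : SimpleGraph (V ⊕ Unit) // IsSpanTwoForest (subdiv G u v) F'},
      (∀ F, (Φ (Sum.inl F) : SimpleGraph (V ⊕ Unit)) = forestIn F.val u v) ∧
      (∀ F, (Φ (Sum.inr (Sum.inl F)) : SimpleGraph (V ⊕ Unit)) = forestOut₁ F.val u) ∧
      (∀ F, (Φ (Sum.inr (Sum.inr (Sum.inl F))) : SimpleGraph (V ⊕ Unit)) = forestOut₂ F.val v) ∧
      (∀ T, (Φ (Sum.inr (Sum.inr (Sum.inr T))) : SimpleGraph (V ⊕ Unit)) = treeEmbed T.val) :=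
  ⟨fun _ hF huv => (isSpanTwoForest_forestIn_iff he huv).mpr hF,
    fun _ hF huv => ⟨isSpanTwoForest_forestOut₁_iff.mpr ⟨hF, huv⟩,
      isSpanTwoForest_forestOut₂_iff.mpr ⟨hF, huv⟩⟩,
    fun _ hT huv => ⟨isSpanTwoForest_treeEmbed_iff.mpr ⟨hT, huv⟩, treeEmbed_not_adj_inr⟩,
    Equiv.ofBijective _ ⟨toSubdivTwoForest_injective he, toSubdivTwoForest_surjective he⟩,
    fun _ => rfl, fun _ => rfl, fun _ => rfl, fun _ => rfl⟩
end

section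
/- Let k be a commutative ring, let N ≥ 2, and let R = k[α₁, …, α_N, y] be the polynomial ring in N+1 variables. Define elements β₁, …, β_{N+1} of R by β_i = α_i for 1 ≤ i ≤ N−1, β_N = y·α_N, and β_{N+1} = (1−y)·α_N. Then, in the exterior algebra over R of the module of Kähler differentials Ω_{R/k}, with d denoting the universal derivation R → Ω_{R/k}, one has the identity Σ_{i=1}^{N+1} (−1)^i β_i · dβ₁ ∧ ⋯ ∧ (dβ_i omitted) ∧ ⋯ ∧ dβ_{N+1} = −α_N · ( Σ_{i=1}^{N} (−1)^i α_i · dα₁ ∧ ⋯ ∧ (dα_i omitted) ∧ ⋯ ∧ dα_N ) ∧ dy. (This expresses that the pullback of the projective volume form Ω_{N+1} = Σ_{i=1}^{N+1} (−1)^i α_i dα₁∧⋯∧\widehat{dα_i}∧⋯∧dα_{N+1} along the subdivision map ρ(y, α₁, …, α_N) = (α₁, …, α_{N−1}, yα_N, (1−y)α_N) equals −α_N·Ω_N ∧ dy.) -/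
open MvPolynomial

/-- The "projective volume form" `Ω = Σ_i (−1)^i c_i · dc₁ ∧ ⋯ ∧ (dc_i omitted) ∧ ⋯ ∧ dc_M`
attached to a family `c : Fin M → R`, as an element of the exterior algebra over `R` of the
module of Kähler differentials `Ω_{R/k}` (indices are 1-based, matching `(−1)^(i+1)` for the
0-based index `i`). -/
noncomputable def omegaForm (k : Type*) [CommRing k] (R : Type*) [CommRing R] [Algebra k R]
    {M : ℕ} (c : Fin M → R) : ExteriorAlgebra R (KaehlerDifferential k R) :=
  ∑ i : Fin M, ((-1 : R) ^ ((i : ℕ) + 1) * c i) •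
    ((List.ofFn fun j : Fin M =>
        ExteriorAlgebra.ι R (KaehlerDifferential.D k R (c j))).eraseIdx (i : ℕ)).prod

/-- The family `β₁, …, β_{N+1}` in `R = k[α₁, …, α_N, y]` given by `β_i = α_i` for
`1 ≤ i ≤ N−1`, `β_N = y·α_N`, `β_{N+1} = (1−y)·α_N`.  Here the variable `y` is indexed by
`none` and `α_i` by `some i` in `MvPolynomial (Option (Fin N)) k`. -/
noncomputable def betaFam (k : Type*) [CommRing k] (N : ℕ) (hN : 2 ≤ N) :
    Fin (N + 1) → MvPolynomial (Option (Fin N)) k := fun j =>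
  if h : (j : ℕ) + 1 < N then X (some ⟨(j : ℕ), by omega⟩)
  else if h2 : (j : ℕ) + 1 = N then X none * X (some ⟨N - 1, by omega⟩)
  else (1 - X none) * X (some ⟨N - 1, by omega⟩)

/-!
Removing the last entry of the family gives `Ω(c, x) = Ω(c) ∧ dx ± x · dc₁ ∧ ⋯ ∧ dc_m`.
Applying this twice to `β = (α', y α_N, (1 - y) α_N)` and once to `α = (α', α_N)` reduces the
identity to two facts about `u = d(y α_N) = y dα_N + α_N dy` and
`v = d((1 - y) α_N) = (1 - y) dα_N - α_N dy`: namely `u ∧ v = -α_N dα_N ∧ dy` and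
`y v - (1 - y) u = -α_N dy`.
-/

open ExteriorAlgebra KaehlerDifferential

theorem omegaForm_snoc (k : Type*) [CommRing k] (R : Type*) [CommRing R] [Algebra k R]
    {m : ℕ} (c : Fin m → R) (x : R) :
    omegaForm k R (Fin.snoc c x : Fin (m + 1) → R) =
      omegaForm k R c * ι R (D k R x) +
        ((-1 : R) ^ (m + 1) * x) • (List.ofFn fun j => ι R (D k R (c j))).prod := by
  have hlen : (List.ofFn fun j => ι R (D k R (c j))).length = m := List.length_ofFn
  simp only [omegaForm, Fin.sum_univ_castSucc, List.ofFn_succ', Fin.snoc_castSucc,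
    Fin.snoc_last, Fin.val_castSucc, Fin.val_last, Finset.sum_mul, smul_mul_assoc,
    List.concat_eq_append]
  congr 1
  · refine Finset.sum_congr rfl fun i _ => ?_
    rw [List.eraseIdx_append_of_lt_length (by simp), List.prod_append, List.prod_singleton]
  · rw [List.eraseIdx_append_of_length_le hlen.le, hlen, Nat.sub_self]
    simp

theorem ι_mul_ι_add_smul_sub_smul {R M : Type*} [CommRing R] [AddCommGroup M] [Module R M]
    (y a : R) (p q : M) :
    ι R (y • p + a • q) * ι R ((1 - y) • p - a • q) = -a • (ι R p * ι R q) := by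
  have hqp : ι R q * ι R p = -(ι R p * ι R q) := eq_neg_of_add_eq_zero_left (ι_add_mul_swap q p)
  rw [map_add, map_sub, add_mul, mul_sub, mul_sub]
  simp only [map_smul, smul_mul_assoc, mul_smul_comm, ι_sq_zero, smul_zero, hqp]
  module

theorem omegaForm_snoc_mul_snoc_one_sub_mul (k : Type*) [CommRing k] (R : Type*) [CommRing R]
    [Algebra k R] {m : ℕ} (c : Fin m → R) (y a : R) :
    omegaForm k R (Fin.snoc (Fin.snoc c (y * a) : Fin (m + 1) → R) ((1 - y) * a)
        : Fin (m + 2) → R) =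
      -(a • (omegaForm k R (Fin.snoc c a : Fin (m + 1) → R) * ι R (D k R y))) := by
  have hDu : D k R (y * a) = y • D k R a + a • D k R y := Derivation.leibniz _ y a
  have hDv : D k R ((1 - y) * a) = (1 - y) • D k R a - a • D k R y := by
    rw [Derivation.leibniz, map_sub, Derivation.map_one_eq_zero, zero_sub, smul_neg,
      ← sub_eq_add_neg]
  rw [omegaForm_snoc, omegaForm_snoc, omegaForm_snoc, List.ofFn_succ', List.concat_eq_append]
  simp only [Fin.snoc_castSucc, Fin.snoc_last, List.prod_append, List.prod_singleton]
  rw [hDu, hDv, add_mul, mul_assoc, ι_mul_ι_add_smul_sub_smul]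
  simp only [map_add, map_sub, map_smul, mul_add, mul_sub, add_mul, mul_smul_comm,
    smul_mul_assoc, mul_assoc, pow_succ]
  module

theorem betaFam_eq_snoc_snoc (k : Type*) [CommRing k] (n : ℕ) (hN : 2 ≤ n + 2) :
    betaFam k (n + 2) hN =
      Fin.snoc
        (Fin.snoc (Fin.init fun i : Fin (n + 2) => X (some i)) (X none * X (some (Fin.last _))))
        ((1 - X none) * X (some (Fin.last _))) := by
  ext j : 1
  refine Fin.lastCases ?_ (Fin.lastCases ?_ fun i => ?_) j <;>
    simp [betaFam, Fin.init, Fin.is_le] <;> rfl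

/-- The pullback of the projective volume form `Ω_{N+1}` along the subdivision map
`ρ(y, α₁, …, α_N) = (α₁, …, α_{N−1}, y·α_N, (1−y)·α_N)` equals `−α_N · Ω_N ∧ dy`. -/
theorem pullback_omegaForm_subdivision (k : Type*) [CommRing k] (N : ℕ) (hN : 2 ≤ N) :
    omegaForm k (MvPolynomial (Option (Fin N)) k) (betaFam k N hN) =
      - ((X (some ⟨N - 1, by omega⟩) : MvPolynomial (Option (Fin N)) k) •
        (omegaForm k (MvPolynomial (Option (Fin N)) k)
            (fun i : Fin N => X (some i)) *
          ExteriorAlgebra.ι _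
            (KaehlerDifferential.D k (MvPolynomial (Option (Fin N)) k)
              (X (none : Option (Fin N)))))) := by
  obtain ⟨n, rfl⟩ : ∃ n, N = n + 2 := ⟨N - 2, by omega⟩
  rw [betaFam_eq_snoc_snoc, omegaForm_snoc_mul_snoc_one_sub_mul, Fin.snoc_init_self]
  rfl
end

section
/- Let ω₁, ω₂, η₁, η₂ ∈ ℂ with ω₁ ≠ 0, set τ = ω₂/ω₁, assume Im τ ≠ 0, and assume the Legendre relation ω₁η₂ − η₁ω₂ = 2πi. Set λ = ω₁/(2πi) and G* = −ω₁η₁/(2·(2πi)²) + 1/(8π·Im τ). Let P be the 2×2 complex matrix with first row (ω₁, η₁) and second row (ω₂, η₂), and let P̄ denote its entrywise complex conjugate. Then P̄ is invertible, and P̄⁻¹·P equals the 2×2 matrix whose (1,1) entry is −(λ/λ̄)·8π·(Im τ)·conj(G*), whose (1,2) entry is (λλ̄)⁻¹·(4π·Im τ)⁻¹·((8π·Im τ)²·G*·conj(G*) − 1), whose (2,1) entry is −λλ̄·4π·Im τ, and whose (2,2) entry is (λ̄/λ)·8π·(Im τ)·G*, where λ̄ and conj(G*) denote complex conjugates. 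-/
/-!
Legendre's and Fricke's relations express the period matrix through `λ`, `τ` and `𝔾₂*` alone:
`ω₁ = 2πi·λ`, `ω₂ = τ·ω₁`, `η₁ = 2·2πi·(1/(8π Im τ) − 𝔾₂*)/λ` and `η₂ = τ·η₁ + 1/λ`.
Complex conjugation preserves this shape, replacing `2πi` by `−2πi`, `λ` by `λ̄`, `𝔾₂*` by its
conjugate and `τ` by `τ̄ = τ + 8π Im τ/(2·2πi)`. The claimed matrix `M` then satisfies `P̄·M = P`
by a rational identity that holds over any field, and `det P̄ = −2πi`.
-/

open Complex Matrix

section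
variable {K : Type*} [Field K]

/-- The period matrix in Legendre–Fricke normal form: `k` stands for `2πi`, `a` for `8π Im τ`
and `G` for `𝔾₂*(τ)`. -/
def ellipticPeriodMatrix (k a lam G τ : K) : Matrix (Fin 2) (Fin 2) K :=
  !![k * lam, 2 * k * (a⁻¹ - G) / lam; τ * (k * lam), τ * (2 * k * (a⁻¹ - G) / lam) + lam⁻¹]

/-- `lam'` and `G'` stand for the complex conjugates of `lam` and `G`. -/
def singleValuedPeriodMatrix (a lam lam' G G' : K) : Matrix (Fin 2) (Fin 2) K :=
  !![-(lam / lam') * a * G', (lam * lam')⁻¹ * (a / 2)⁻¹ * (a ^ 2 * G * G' - 1);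
     -(lam * lam') * (a / 2), (lam' / lam) * a * G]

theorem det_ellipticPeriodMatrix {k lam : K} (a G τ : K) (hlam : lam ≠ 0) :
    (ellipticPeriodMatrix k a lam G τ).det = k := by
  rw [ellipticPeriodMatrix, det_fin_two_of]
  field_simp
  ring

theorem ellipticPeriodMatrix_map {L : Type*} [Field L] (f : K →+* L) (k a lam G τ : K) :
    (ellipticPeriodMatrix k a lam G τ).map f =
      ellipticPeriodMatrix (f k) (f a) (f lam) (f G) (f τ) := by
  ext i j
  fin_cases i <;> fin_cases j <;> simp [ellipticPeriodMatrix, map_ofNat]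

theorem ellipticPeriodMatrix_mul_singleValuedPeriodMatrix [NeZero (2 : K)] {k a lam lam' : K}
    (G G' τ : K) (hk : k ≠ 0) (ha : a ≠ 0) (hlam : lam ≠ 0) (hlam' : lam' ≠ 0) :
    ellipticPeriodMatrix (-k) a lam' G' (τ + a / (2 * k)) *
        singleValuedPeriodMatrix a lam lam' G G' =
      ellipticPeriodMatrix k a lam G τ := by
  ext i j
  fin_cases i <;> fin_cases j <;>
    · simp [ellipticPeriodMatrix, singleValuedPeriodMatrix, Matrix.mul_apply]
      field_simp
      ring

end

/-- The single-valued period matrix `P̄⁻¹·P` of an elliptic curve with period matrix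
`P = !![ω₁, η₁; ω₂, η₂]` (rows: Betti homology basis, columns: forms of the first and second
kind), in terms of `τ = ω₂/ω₁`, `λ = ω₁/(2πi)` and the completed Eisenstein series
`𝔾₂* = −ω₁η₁/(2(2πi)²) + 1/(8π·Im τ)`. -/
theorem singleValued_period_matrix_elliptic
    (ω₁ ω₂ η₁ η₂ τ lam Gs : ℂ)
    (hω : ω₁ ≠ 0) (hτ : τ = ω₂ / ω₁) (him : τ.im ≠ 0)
    (hleg : ω₁ * η₂ - η₁ * ω₂ = 2 * (Real.pi : ℂ) * Complex.I)
    (hlam : lam = ω₁ / (2 * (Real.pi : ℂ) * Complex.I))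
    (hGs : Gs = -(ω₁ * η₁) / (2 * (2 * (Real.pi : ℂ) * Complex.I) ^ 2) +
      ((1 / (8 * Real.pi * τ.im) : ℝ) : ℂ)) :
    IsUnit ((!![ω₁, η₁; ω₂, η₂]).map (starRingEnd ℂ)).det ∧
    ((!![ω₁, η₁; ω₂, η₂]).map (starRingEnd ℂ))⁻¹ * !![ω₁, η₁; ω₂, η₂] =
      !![-(lam / starRingEnd ℂ lam) * ((8 * Real.pi * τ.im : ℝ) : ℂ) * starRingEnd ℂ Gs,
          (lam * starRingEnd ℂ lam)⁻¹ * (((4 * Real.pi * τ.im : ℝ) : ℂ))⁻¹ *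
            (((8 * Real.pi * τ.im : ℝ) : ℂ) ^ 2 * Gs * starRingEnd ℂ Gs - 1);
         -(lam * starRingEnd ℂ lam) * ((4 * Real.pi * τ.im : ℝ) : ℂ),
          (starRingEnd ℂ lam / lam) * ((8 * Real.pi * τ.im : ℝ) : ℂ) * Gs] := by
  set k : ℂ := 2 * Real.pi * I with hk_def
  set a : ℂ := ((8 * Real.pi * τ.im : ℝ) : ℂ) with ha_def
  have hk : k ≠ 0 := by simp [hk_def, Real.pi_ne_zero]
  have ha : a ≠ 0 := by simp [ha_def, Real.pi_ne_zero, him]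
  have hlam0 : lam ≠ 0 := by simp [hlam, hω, hk]
  have hlam0' : starRingEnd ℂ lam ≠ 0 := by simpa using hlam0
  have hP : !![ω₁, η₁; ω₂, η₂] = ellipticPeriodMatrix k a lam Gs τ := by
    have hω₁ : k * lam = ω₁ := by rw [hlam]; field_simp
    have hη₁ : 2 * k * (a⁻¹ - Gs) / lam = η₁ := by
      rw [hGs, ← hω₁, ofReal_div, ofReal_one, ← ha_def]
      field_simp
      ring
    have hω₂ : τ * ω₁ = ω₂ := by rw [hτ]; field_simp
    have hη₂ : τ * η₁ + lam⁻¹ = η₂ := by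
      rw [hlam, inv_div, ← hleg, ← hω₂]
      field_simp
      ring
    rw [ellipticPeriodMatrix, hω₁, hη₁, hω₂, hη₂]
  have hconj_k : starRingEnd ℂ k = -k := by simp [hk_def, map_ofNat]
  have hconj_a : starRingEnd ℂ a = a := conj_ofReal _
  have hconj_τ : starRingEnd ℂ τ = τ + a / (2 * k) := by
    have ha_div : a / (2 * k) = -(2 * τ.im * I) := by
      rw [div_eq_iff (mul_ne_zero two_ne_zero hk), ha_def, hk_def]
      push_cast
      linear_combination (8 * Real.pi * τ.im) * I_sq
    have hsub := sub_conj τ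
    push_cast at hsub
    rw [ha_div]
    linear_combination -hsub
  have hPbar : (!![ω₁, η₁; ω₂, η₂]).map (starRingEnd ℂ) =
      ellipticPeriodMatrix (-k) a (starRingEnd ℂ lam) (starRingEnd ℂ Gs) (τ + a / (2 * k)) := by
    rw [hP, ellipticPeriodMatrix_map, hconj_k, hconj_a, hconj_τ]
  have hunit : IsUnit ((!![ω₁, η₁; ω₂, η₂]).map (starRingEnd ℂ)).det := by
    rw [hPbar, det_ellipticPeriodMatrix _ _ _ hlam0']
    exact (neg_ne_zero.mpr hk).isUnit
  refine ⟨hunit, ?_⟩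
  have h4 : ((4 * Real.pi * τ.im : ℝ) : ℂ) = a / 2 := by rw [ha_def]; push_cast; ring
  rw [hPbar] at hunit ⊢
  rw [hP, ← ellipticPeriodMatrix_mul_singleValuedPeriodMatrix Gs (starRingEnd ℂ Gs) τ
    hk ha hlam0 hlam0', nonsing_inv_mul_cancel_left _ _ hunit, h4, singleValuedPeriodMatrix]
end

section
/- Let ω₁, ω₂, η₁, η₂ ∈ ℂ with ω₁ ≠ 0, Im(ω₂/ω₁) ≠ 0, and the Legendre relation ω₁η₂ − η₁ω₂ = 2πi, and let w, u ∈ ℂ. Let P be the 2×2 matrix with rows (ω₁, η₁) and (ω₂, η₂), let S = P̄⁻¹·P be its single-valued period matrix, and let P₃ be the 3×3 matrix with rows (ω₁, η₁, 0), (ω₂, η₂, 0) and (w, u, 1). Then P̄₃ is invertible and P̄₃⁻¹·P₃ is the 3×3 matrix whose upper-left 2×2 block is S, whose (1,3) and (2,3) entries are 0, whose (3,3) entry is 1, and whose third row's first two entries are (w − w̄·S₁₁ − ū·S₂₁, u − w̄·S₁₂ − ū·S₂₂), where w̄, ū denote complex conjugates. (This computes the single-valued period matrix of the relative cohomology H¹(E,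 {P,Q}) of an elliptic curve relative to two points, whose period matrix has the block form P₃ with w = z₁ − z₂ and u = ζ(z₁) − ζ(z₂); the new third-row entries are the single-valued periods of the de Rham incomplete elliptic integrals of the first and second kind.) -/
open Complex Matrix

/-- The single-valued period matrix of the relative cohomology `H¹(E, {P,Q})` of an elliptic
curve relative to two points: for the 3×3 period matrix
`P₃ = !![ω₁, η₁, 0; ω₂, η₂, 0; w, u, 1]`, the matrix `P̄₃⁻¹·P₃` has the single-valued period
matrix `S = P̄⁻¹·P` of the elliptic curve as its upper-left 2×2 block, last column `(0,0,1)ᵀ`,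
and third row beginning with `(w − w̄·S₁₁ − ū·S₂₁, u − w̄·S₁₂ − ū·S₂₂)`. -/
theorem singleValued_period_matrix_relative
    (ω₁ ω₂ η₁ η₂ w u : ℂ) (S : Matrix (Fin 2) (Fin 2) ℂ)
    (hω : ω₁ ≠ 0) (him : (ω₂ / ω₁).im ≠ 0)
    (hleg : ω₁ * η₂ - η₁ * ω₂ = 2 * (Real.pi : ℂ) * Complex.I)
    (hS : S = ((!![ω₁, η₁; ω₂, η₂]).map (starRingEnd ℂ))⁻¹ * !![ω₁, η₁; ω₂, η₂]) :
    IsUnit ((!![ω₁, η₁, 0; ω₂, η₂, 0; w, u, 1]).map (starRingEnd ℂ)).det ∧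
    ((!![ω₁, η₁, 0; ω₂, η₂, 0; w, u, 1]).map (starRingEnd ℂ))⁻¹ *
        !![ω₁, η₁, 0; ω₂, η₂, 0; w, u, 1] =
      !![S 0 0, S 0 1, 0;
         S 1 0, S 1 1, 0;
         w - starRingEnd ℂ w * S 0 0 - starRingEnd ℂ u * S 1 0,
           u - starRingEnd ℂ w * S 0 1 - starRingEnd ℂ u * S 1 1, 1] := by
  set c := starRingEnd ℂ
  have hne : c ω₁ * c η₂ - c η₁ * c ω₂ ≠ 0 := by
    have : c ω₁ * c η₂ - c η₁ * c ω₂ = c (2 * (Real.pi : ℂ) * Complex.I) := by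
      rw [← RingHom.map_mul, ← RingHom.map_mul, ← RingHom.map_sub, hleg]
    rw [this]
    simp [c, Complex.ext_iff, Real.pi_ne_zero]
  have hdet2 : IsUnit ((!![ω₁, η₁; ω₂, η₂]).map c).det := by
    rw [Matrix.det_fin_two]
    simpa [Matrix.map_apply, isUnit_iff_ne_zero] using hne
  have hPS : ((!![ω₁, η₁; ω₂, η₂]).map c) * S = !![ω₁, η₁; ω₂, η₂] := by
    rw [hS, Matrix.mul_nonsing_inv_cancel_left _ _ hdet2]
  have e00 := congrFun (congrFun hPS 0) 0
  have e01 := congrFun (congrFun hPS 0) 1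
  have e10 := congrFun (congrFun hPS 1) 0
  have e11 := congrFun (congrFun hPS 1) 1
  simp [Matrix.mul_apply, Fin.sum_univ_two, Matrix.map_apply] at e00 e01 e10 e11
  have hdet3 : IsUnit ((!![ω₁, η₁, 0; ω₂, η₂, 0; w, u, 1]).map c).det := by
    rw [Matrix.det_fin_three]
    simpa [Matrix.map_apply, isUnit_iff_ne_zero] using hne
  refine ⟨hdet3, ?_⟩
  haveI := ((!![ω₁, η₁, 0; ω₂, η₂, 0; w, u, 1]).map c).invertibleOfIsUnitDet hdet3
  rw [Matrix.inv_mul_eq_iff_eq_mul_of_invertible]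
  ext i j
  fin_cases i <;> fin_cases j <;>
    simp [Matrix.mul_apply, Fin.sum_univ_three, Matrix.map_apply]
  case _ => exact e00.symm
  case _ => exact e01.symm
  case _ => exact e10.symm
  case _ => exact e11.symm
end

section
/- Let m₁, m₂, m₃ > 0 and t ≥ 0 be real numbers, and set Ψ(x,y,z) = xy + yz + zx and Ξ(x,y,z) = t·xyz + (m₁²x + m₂²y + m₃²z)·Ψ(x,y,z). Then the function (x, y, w) ↦ Ψ(x + w, y, 1)/Ξ(x + w, y, 1)² is Lebesgue integrable on (0,∞)³, the function (x, y) ↦ x·Ψ(x, y, 1)/Ξ(x, y, 1)² is Lebesgue integrable on (0,∞)², and ∫_{(0,∞)³} Ψ(x + w, y, 1)/Ξ(x + w, y, 1)² dx dy dw = ∫_{(0,∞)²} x·Ψ(x, y, 1)/Ξ(x, y, 1)² dx dy. (This is the affine-chart statement that the d = 2 Feynman integral of the graph obtained from the sunrise by subdividing the edge e₁ once equals the integral over the sunrise of the modified integrand α₁·Ψ_G/Ξ_G²·Ω_G, the analytic content of the subdivision-of-edges correspondence for a single subdivision.) -/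
open MeasureTheory Set

/-- The first Symanzik polynomial of the sunrise graph. -/
def sunrisePsi (x y z : ℝ) : ℝ := x * y + y * z + z * x

/-- The second Symanzik polynomial of the sunrise graph, with masses `m₁, m₂, m₃` and
momentum invariant `t = q₁²`. -/
def sunriseXi (m₁ m₂ m₃ t x y z : ℝ) : ℝ :=
  t * x * y * z + (m₁ ^ 2 * x + m₂ ^ 2 * y + m₃ ^ 2 * z) * sunrisePsi x y z

/-!
Both sides are integrals of functions that are nonnegative on the domain, so everything reduces
to the corresponding lower Lebesgue integrals. By Tonelli, with `y` innermost, the substitution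
`s = x + w` turns `∫∫_{x,w>0} h (x + w)` into `∫_{s>0} s h(s)`, since the segment `x + w = s` in
the quadrant has length `s`; this identifies the two sides. For finiteness,
`Ξ(x,y,1) ≥ c (x + y + 1) Ψ(x,y,1)` with `c = min mᵢ²` and `Ψ(x,y,1) ≥ x (y + 1)` give
`x Ψ/Ξ² ≤ c⁻² (y + 1)⁻¹ (x + y + 1)⁻²`, whose integral over the quadrant is `1`.
-/

open ENNReal Function

@[fun_prop]
lemma Measurable.sunrisePsi {α : Type*} [MeasurableSpace α] {f g h : α → ℝ} (hf : Measurable f)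
    (hg : Measurable g) (hh : Measurable h) : Measurable fun a => sunrisePsi (f a) (g a) (h a) := by
  unfold _root_.sunrisePsi; fun_prop

@[fun_prop]
lemma Measurable.sunriseXi {α : Type*} [MeasurableSpace α] {m₁ m₂ m₃ t : ℝ} {f g h : α → ℝ}
    (hf : Measurable f) (hg : Measurable g) (hh : Measurable h) :
    Measurable fun a => sunriseXi m₁ m₂ m₃ t (f a) (g a) (h a) := by
  unfold _root_.sunriseXi; fun_prop

section Bounds

variable {m₁ m₂ m₃ t x y : ℝ}

lemma sunrisePsi_nonneg (hx : 0 ≤ x) (hy : 0 ≤ y) : 0 ≤ sunrisePsi x y 1 := by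
  unfold sunrisePsi; positivity

lemma mul_sunrisePsi_le_sunriseXi {c : ℝ} (h₁ : c ≤ m₁ ^ 2) (h₂ : c ≤ m₂ ^ 2)
    (h₃ : c ≤ m₃ ^ 2) (ht : 0 ≤ t) (hx : 0 ≤ x) (hy : 0 ≤ y) :
    c * (x + y + 1) * sunrisePsi x y 1 ≤ sunriseXi m₁ m₂ m₃ t x y 1 := by
  have hΨ := sunrisePsi_nonneg hx hy
  have : 0 ≤ ((m₁ ^ 2 - c) * x + (m₂ ^ 2 - c) * y + (m₃ ^ 2 - c)) * sunrisePsi x y 1 := by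
    have := sub_nonneg.2 h₁; have := sub_nonneg.2 h₂; have := sub_nonneg.2 h₃; positivity
  have : 0 ≤ t * x * y := by positivity
  unfold sunriseXi; nlinarith

lemma mul_sunrisePsi_div_sunriseXi_sq_le {c : ℝ} (hc : 0 < c) (h₁ : c ≤ m₁ ^ 2)
    (h₂ : c ≤ m₂ ^ 2) (h₃ : c ≤ m₃ ^ 2) (ht : 0 ≤ t) (hx : 0 < x) (hy : 0 < y) :
    x * sunrisePsi x y 1 / sunriseXi m₁ m₂ m₃ t x y 1 ^ 2
      ≤ (c ^ 2)⁻¹ * ((y + 1)⁻¹ * ((x + (y + 1)) ^ 2)⁻¹) := by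
  have hΨ : x * (y + 1) ≤ sunrisePsi x y 1 := by unfold sunrisePsi; nlinarith
  have hΨpos : 0 < sunrisePsi x y 1 := lt_of_lt_of_le (by positivity) hΨ
  have hΞ := mul_sunrisePsi_le_sunriseXi h₁ h₂ h₃ ht hx.le hy.le
  calc x * sunrisePsi x y 1 / sunriseXi m₁ m₂ m₃ t x y 1 ^ 2
      ≤ x * sunrisePsi x y 1 / (c * (x + y + 1) * sunrisePsi x y 1) ^ 2 := by gcongr
    _ = x / (c ^ 2 * (x + (y + 1)) ^ 2 * sunrisePsi x y 1) := by field_simp; ring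
    _ ≤ x / (c ^ 2 * (x + (y + 1)) ^ 2 * (x * (y + 1))) := by gcongr
    _ = (c ^ 2)⁻¹ * ((y + 1)⁻¹ * ((x + (y + 1)) ^ 2)⁻¹) := by field_simp

end Bounds

lemma setLIntegral_Ioi_zero_comp_add (h : ℝ → ℝ≥0∞) (x : ℝ) :
    ∫⁻ w in Ioi 0, h (x + w) = ∫⁻ s in Ioi x, h s := by
  have := (measurePreserving_add_left volume x).setLIntegral_comp_emb
    (measurableEmbedding_addLeft x) h (Ioi 0)
  rwa [image_const_add_Ioi, add_zero] at this

theorem lintegral_Ioi_lintegral_Ioi_comp_add {h : ℝ → ℝ≥0∞} (hh : Measurable h) :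
    ∫⁻ x in Ioi 0, ∫⁻ w in Ioi 0, h (x + w) = ∫⁻ s in Ioi 0, ENNReal.ofReal s * h s := by
  calc ∫⁻ x in Ioi 0, ∫⁻ w in Ioi 0, h (x + w)
      = ∫⁻ x in Ioi 0, ∫⁻ s in Ioi 0, (Ioi x).indicator h s := by
        refine setLIntegral_congr_fun measurableSet_Ioi fun x hx => ?_
        rw [setLIntegral_Ioi_zero_comp_add, lintegral_indicator measurableSet_Ioi,
          Measure.restrict_restrict measurableSet_Ioi, inter_eq_left.2 (Ioi_subset_Ioi hx.le)]
    _ = ∫⁻ s in Ioi 0, ∫⁻ x in Ioi 0, (Iio s).indicator (fun _ => h s) x := by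
        have hm : Measurable (uncurry fun x s => (Ioi x).indicator h s) :=
          (hh.comp measurable_snd).indicator (measurableSet_lt measurable_fst measurable_snd)
        rw [lintegral_lintegral_swap hm.aemeasurable]
        simp only [indicator, mem_Ioi, mem_Iio]
    _ = ∫⁻ s in Ioi 0, ENNReal.ofReal s * h s := by
        refine setLIntegral_congr_fun measurableSet_Ioi fun s hs => ?_
        rw [lintegral_indicator_const measurableSet_Iio, Measure.restrict_apply measurableSet_Iio,
          Iio_inter_Ioi, Real.volume_Ioo, sub_zero, mul_comm]

section ChangeOfVariables

variable {α : Type*} [MeasurableSpace α] {ν : Measure α} [SFinite ν]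

theorem lintegral_prod_prod_comp_add {f : ℝ → α → ℝ≥0∞} (hf : Measurable (uncurry f)) :
    ∫⁻ q, f (q.1 + q.2.2) q.2.1 ∂(volume.restrict (Ioi 0)).prod (ν.prod (volume.restrict (Ioi 0)))
      = ∫⁻ p, ENNReal.ofReal p.1 * f p.1 p.2 ∂(volume.restrict (Ioi 0)).prod ν := by
  have hG : Measurable fun s => ∫⁻ y, f s y ∂ν := hf.lintegral_prod_right'
  calc _ = ∫⁻ x in Ioi 0, ∫⁻ w in Ioi 0, ∫⁻ y, f (x + w) y ∂ν := by
        rw [lintegral_prod _ (by fun_prop)]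
        refine lintegral_congr fun x => ?_
        exact lintegral_prod_symm _ (by fun_prop)
    _ = ∫⁻ s in Ioi 0, ENNReal.ofReal s * ∫⁻ y, f s y ∂ν :=
        lintegral_Ioi_lintegral_Ioi_comp_add hG
    _ = _ := by
        rw [lintegral_prod _ (by fun_prop)]
        refine lintegral_congr fun s => ?_
        exact (lintegral_const_mul _ hf.of_uncurry_left).symm

end ChangeOfVariables

theorem integrable_and_integral_eq_of_lintegral_ofReal_eq {α β : Type*} [MeasurableSpace α]
    [MeasurableSpace β] {μ : Measure α} {ν : Measure β} {f : α → ℝ} {g : β → ℝ}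
    (hf : 0 ≤ᵐ[μ] f) (hg : 0 ≤ᵐ[ν] g)
    (hfm : AEStronglyMeasurable f μ) (hgm : AEStronglyMeasurable g ν)
    (heq : ∫⁻ a, ENNReal.ofReal (f a) ∂μ = ∫⁻ b, ENNReal.ofReal (g b) ∂ν)
    (hfin : ∫⁻ b, ENNReal.ofReal (g b) ∂ν < ⊤) :
    Integrable f μ ∧ Integrable g ν ∧ ∫ a, f a ∂μ = ∫ b, g b ∂ν := by
  refine ⟨⟨hfm, (hasFiniteIntegral_iff_ofReal hf).2 (heq ▸ hfin)⟩,
    ⟨hgm, (hasFiniteIntegral_iff_ofReal hg).2 hfin⟩, ?_⟩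
  rw [integral_eq_lintegral_of_nonneg_ae hf hfm, integral_eq_lintegral_of_nonneg_ae hg hgm, heq]

theorem lintegral_Ioi_inv_add_sq {a : ℝ} (ha : 0 < a) :
    ∫⁻ x in Ioi 0, ENNReal.ofReal ((x + a) ^ 2)⁻¹ = ENNReal.ofReal a⁻¹ := by
  have hderiv : ∀ x ∈ Ici (0 : ℝ), HasDerivAt (fun s => -(s + a)⁻¹) ((x + a) ^ 2)⁻¹ x := by
    intro x hx
    have hxa : x + a ≠ 0 := by have : (0 : ℝ) ≤ x := hx; positivity
    refine (((hasDerivAt_id x).add_const a).inv hxa).neg.congr_deriv ?_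
    simp only [id, neg_div, neg_neg, one_div]
  have hnonneg : ∀ x ∈ Ioi (0 : ℝ), 0 ≤ ((x + a) ^ 2)⁻¹ := fun x _ => by positivity
  have hlim : Filter.Tendsto (fun s => -(s + a)⁻¹) Filter.atTop (nhds 0) := by
    simpa using (Filter.tendsto_atTop_add_const_right _ a Filter.tendsto_id).inv_tendsto_atTop.neg
  rw [← ofReal_integral_eq_lintegral_ofReal (integrableOn_Ioi_deriv_of_nonneg' hderiv hnonneg hlim)
    (ae_restrict_of_forall_mem measurableSet_Ioi hnonneg),
    integral_Ioi_of_hasDerivAt_of_nonneg' hderiv hnonneg hlim]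
  simp

theorem lintegral_Ioi_prod_Ioi_inv_mul_inv_add_sq :
    ∫⁻ p in Ioi (0 : ℝ) ×ˢ Ioi 0, ENNReal.ofReal ((p.2 + 1)⁻¹ * ((p.1 + (p.2 + 1)) ^ 2)⁻¹) = 1 := by
  rw [Measure.volume_eq_prod, ← Measure.prod_restrict, lintegral_prod_symm _ (by fun_prop)]
  calc ∫⁻ y in Ioi 0, ∫⁻ x in Ioi 0, ENNReal.ofReal ((y + 1)⁻¹ * ((x + (y + 1)) ^ 2)⁻¹)
      = ∫⁻ y in Ioi 0, ENNReal.ofReal ((y + 1) ^ 2)⁻¹ := by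
        refine setLIntegral_congr_fun measurableSet_Ioi fun y hy => ?_
        have hy1 : (0 : ℝ) < y + 1 := by have : (0 : ℝ) < y := hy; linarith
        simp_rw [ENNReal.ofReal_mul (inv_nonneg.2 hy1.le)]
        rw [lintegral_const_mul _ (by fun_prop), lintegral_Ioi_inv_add_sq hy1,
          ← ENNReal.ofReal_mul (inv_nonneg.2 hy1.le), ← mul_inv, sq]
    _ = 1 := by rw [lintegral_Ioi_inv_add_sq one_pos, inv_one, ENNReal.ofReal_one]

theorem lintegral_mul_sunrisePsi_div_sunriseXi_sq_lt_top {m₁ m₂ m₃ t : ℝ} (h₁ : m₁ ≠ 0)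
    (h₂ : m₂ ≠ 0) (h₃ : m₃ ≠ 0) (ht : 0 ≤ t) :
    ∫⁻ p in Ioi (0 : ℝ) ×ˢ Ioi 0,
      ENNReal.ofReal (p.1 * sunrisePsi p.1 p.2 1 / sunriseXi m₁ m₂ m₃ t p.1 p.2 1 ^ 2) < ⊤ := by
  set c := min (m₁ ^ 2) (min (m₂ ^ 2) (m₃ ^ 2))
  have hc : 0 < c := by positivity
  calc _ ≤ ∫⁻ p in Ioi (0 : ℝ) ×ˢ Ioi 0, ENNReal.ofReal (c ^ 2)⁻¹ *
          ENNReal.ofReal ((p.2 + 1)⁻¹ * ((p.1 + (p.2 + 1)) ^ 2)⁻¹) := by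
        refine setLIntegral_mono (by fun_prop) fun p hp => ?_
        rw [← ENNReal.ofReal_mul (by positivity)]
        exact ENNReal.ofReal_le_ofReal <| mul_sunrisePsi_div_sunriseXi_sq_le hc (min_le_left _ _)
          ((min_le_right _ _).trans (min_le_left _ _)) ((min_le_right _ _).trans (min_le_right _ _))
          ht hp.1 hp.2
    _ = ENNReal.ofReal (c ^ 2)⁻¹ := by
        rw [lintegral_const_mul _ (by fun_prop), lintegral_Ioi_prod_Ioi_inv_mul_inv_add_sq, mul_one]
    _ < ⊤ := ofReal_lt_top

/-- Subdivision of edges for the sunrise, in the affine chart `α₃ = 1`: the `d = 2` Feynman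
integral of the graph obtained from the sunrise by subdividing the edge `e₁` once (an integral
over `(0,∞)³`) equals the integral over the sunrise of the modified integrand
`α₁·Ψ/Ξ²`; both integrands are Lebesgue integrable on their domains. -/
theorem sunrise_subdivision_integral
    (m₁ m₂ m₃ t : ℝ) (h₁ : 0 < m₁) (h₂ : 0 < m₂) (h₃ : 0 < m₃) (ht : 0 ≤ t) :
    IntegrableOn
      (fun q : ℝ × ℝ × ℝ =>
        sunrisePsi (q.1 + q.2.2) q.2.1 1 / (sunriseXi m₁ m₂ m₃ t (q.1 + q.2.2) q.2.1 1) ^ 2)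
      (Ioi (0 : ℝ) ×ˢ Ioi (0 : ℝ) ×ˢ Ioi (0 : ℝ)) ∧
    IntegrableOn
      (fun q : ℝ × ℝ =>
        q.1 * sunrisePsi q.1 q.2 1 / (sunriseXi m₁ m₂ m₃ t q.1 q.2 1) ^ 2)
      (Ioi (0 : ℝ) ×ˢ Ioi (0 : ℝ)) ∧
    ∫ q in Ioi (0 : ℝ) ×ˢ Ioi (0 : ℝ) ×ˢ Ioi (0 : ℝ),
        sunrisePsi (q.1 + q.2.2) q.2.1 1 / (sunriseXi m₁ m₂ m₃ t (q.1 + q.2.2) q.2.1 1) ^ 2 =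
      ∫ q in Ioi (0 : ℝ) ×ˢ Ioi (0 : ℝ),
        q.1 * sunrisePsi q.1 q.2 1 / (sunriseXi m₁ m₂ m₃ t q.1 q.2 1) ^ 2 := by
  have hS2 : MeasurableSet (Ioi (0 : ℝ) ×ˢ Ioi (0 : ℝ)) := measurableSet_Ioi.prod measurableSet_Ioi
  have hlin : ∫⁻ q in Ioi (0 : ℝ) ×ˢ Ioi 0 ×ˢ Ioi 0, ENNReal.ofReal
        (sunrisePsi (q.1 + q.2.2) q.2.1 1 / sunriseXi m₁ m₂ m₃ t (q.1 + q.2.2) q.2.1 1 ^ 2)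
      = ∫⁻ p in Ioi (0 : ℝ) ×ˢ Ioi 0,
          ENNReal.ofReal (p.1 * sunrisePsi p.1 p.2 1 / sunriseXi m₁ m₂ m₃ t p.1 p.2 1 ^ 2) := by
    calc _ = ∫⁻ p in Ioi (0 : ℝ) ×ˢ Ioi 0, ENNReal.ofReal p.1 *
          ENNReal.ofReal (sunrisePsi p.1 p.2 1 / sunriseXi m₁ m₂ m₃ t p.1 p.2 1 ^ 2) := by
          rw [Measure.volume_eq_prod, Measure.volume_eq_prod, ← Measure.prod_restrict,
            ← Measure.prod_restrict]
          exact lintegral_prod_prod_comp_add (by fun_prop) (f := fun x y =>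
            ENNReal.ofReal (sunrisePsi x y 1 / sunriseXi m₁ m₂ m₃ t x y 1 ^ 2))
      _ = _ := setLIntegral_congr_fun hS2 fun p hp => by
          rw [mul_div_assoc, ENNReal.ofReal_mul hp.1.le]
  refine integrable_and_integral_eq_of_lintegral_ofReal_eq ?_ ?_
    (by fun_prop : Measurable _).aestronglyMeasurable
    (by fun_prop : Measurable _).aestronglyMeasurable hlin
    (lintegral_mul_sunrisePsi_div_sunriseXi_sq_lt_top h₁.ne' h₂.ne' h₃.ne' ht)
  · exact ae_restrict_of_forall_mem (measurableSet_Ioi.prod hS2) fun q hq =>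
      div_nonneg (sunrisePsi_nonneg (add_pos hq.1 hq.2.2).le hq.2.1.le) (sq_nonneg _)
  · exact ae_restrict_of_forall_mem hS2 fun p hp =>
      div_nonneg (mul_nonneg hp.1.le (sunrisePsi_nonneg hp.1.le hp.2.le)) (sq_nonneg _)
end
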